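/- Let u : ℝ × ℝ → ℝ be of class C^∞ and satisfy the mKdV equation ∂_t u + u²·∂_x u + ∂_x³ u = 0 everywhere, and fix (x,t) ∈ ℝ². For Δx, Δt > 0 define the sampled grid values v_{i,j} = u(x + i·Δx, t + (j − 1/2)·Δt) for integers i, j, and let R(Δx, Δt) be the residual of the AVF_EC = EC₁₀(0) scheme at the base point: R = D_m μ_m[ (1/3)·(μ_n v_{-1,0})·μ_n((v_{-1,0})²) + D_m²μ_n v_{-2,0} ] + D_n v_{0,0}, where the difference and average operators act on the sampled grid values. Then R(Δx, Δt) = O(Δx² + Δt²) as (Δx, Δt) → (0,0) with Δx, Δt > 0; that is, the AVF_EC scheme is second-order accurate at the centre (x, t) of the stencil. -/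

import Mathlib

noncomputable section

/-- Shift operator: `(Sh i j u)(m,n) = u(m+i, n+j)`. -/
def Sh (i j : ℤ) (f : ℤ × ℤ → ℝ) : ℤ × ℤ → ℝ := fun p => f (p.1 + i, p.2 + j)

/-- Forward difference in space: `D_m f = (S_m f − f)/Δx`. -/
def Dm (dx : ℝ) (f : ℤ × ℤ → ℝ) : ℤ × ℤ → ℝ := fun p => (f (p.1 + 1, p.2) - f p) / dx

/-- Forward difference in time: `D_n f = (S_n f − f)/Δt`. -/
def Dn (dt : ℝ) (f : ℤ × ℤ → ℝ) : ℤ × ℤ → ℝ := fun p => (f (p.1, p.2 + 1) - f p) / dt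

/-- Forward average in space: `μ_m f = (S_m f + f)/2`. -/
def μm (f : ℤ × ℤ → ℝ) : ℤ × ℤ → ℝ := fun p => (f (p.1 + 1, p.2) + f p) / 2

/-- Forward average in time: `μ_n f = (S_n f + f)/2`. -/
def μn (f : ℤ × ℤ → ℝ) : ℤ × ℤ → ℝ := fun p => (f (p.1, p.2 + 1) + f p) / 2

/-- Partial derivative with respect to the first (space) variable. -/
def pdx (f : ℝ × ℝ → ℝ) : ℝ × ℝ → ℝ := fun p => deriv (fun y => f (y, p.2)) p.1

/-- Partial derivative with respect to the second (time) variable. -/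
def pdt (f : ℝ × ℝ → ℝ) : ℝ × ℝ → ℝ := fun p => deriv (fun s => f (p.1, s)) p.2

/-- Sampled grid values `v_{i,j} = u(x + iΔx, t + (j − 1/2)Δt)`. -/
def gridSample (u : ℝ × ℝ → ℝ) (x t dx dt : ℝ) : ℤ × ℤ → ℝ :=
  fun p => u (x + (p.1 : ℝ) * dx, t + ((p.2 : ℝ) - 1/2) * dt)

/-- Residual of the AVF_EC = EC₁₀(0) scheme at the base point of the sampled grid. -/
def avfECres (u : ℝ × ℝ → ℝ) (x t dx dt : ℝ) : ℝ :=
  (Dm dx (μm ((1/3 : ℝ) • (μn (Sh (-1) 0 (gridSample u x t dx dt))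
        * μn ((Sh (-1) 0 (gridSample u x t dx dt)) ^ 2))
      + Dm dx (Dm dx (μn (Sh (-2) 0 (gridSample u x t dx dt))))))
    + Dn dt (gridSample u x t dx dt)) (0, 0)

/-! ### Auxiliary lemmas -/

open Set Filter Asymptotics

lemma hasDerivAt_slice1 {F : ℝ × ℝ → ℝ} (hF : ContDiff ℝ (⊤ : ℕ∞) F) (y b : ℝ) :
    HasDerivAt (fun z => F (z, b)) (fderiv ℝ F (y, b) (1, 0)) y := by
  have hin : HasDerivAt (fun z : ℝ => (z, b)) ((1 : ℝ), (0 : ℝ)) y := by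
    simpa using (hasDerivAt_id y).prodMk (hasDerivAt_const y b)
  exact ((hF.differentiable (by simp) (y, b)).hasFDerivAt.comp_hasDerivAt y hin)

lemma pdx_eq_fderiv {F : ℝ × ℝ → ℝ} (hF : ContDiff ℝ (⊤ : ℕ∞) F) (p : ℝ × ℝ) :
    pdx F p = fderiv ℝ F p (1, 0) := by
  have := (hasDerivAt_slice1 hF p.1 p.2).deriv
  simpa [pdx] using this

lemma pdt_eq_fderiv {F : ℝ × ℝ → ℝ} (hF : ContDiff ℝ (⊤ : ℕ∞) F) (p : ℝ × ℝ) :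
    pdt F p = fderiv ℝ F p (0, 1) := by
  have hin : HasDerivAt (fun s : ℝ => (p.1, s)) ((0 : ℝ), (1 : ℝ)) p.2 := by
    simpa using (hasDerivAt_const p.2 p.1).prodMk (hasDerivAt_id p.2)
  have := ((hF.differentiable (by simp) (p.1, p.2)).hasFDerivAt.comp_hasDerivAt p.2 hin).deriv
  simpa [pdt, Function.comp_def] using this

lemma contDiff_pdx {F : ℝ × ℝ → ℝ} (hF : ContDiff ℝ (⊤ : ℕ∞) F) : ContDiff ℝ (⊤ : ℕ∞) (pdx F) := by
  have : pdx F = fun p => fderiv ℝ F p (1, 0) := funext fun p => pdx_eq_fderiv hF p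
  rw [this]
  exact (hF.fderiv_right (by simp)).clm_apply contDiff_const

lemma hasDerivAt_line {F : ℝ × ℝ → ℝ} (hF : ContDiff ℝ (⊤ : ℕ∞) F) (x b e a : ℝ) :
    HasDerivAt (fun s : ℝ => F (x + e * s, b)) (e * pdx F (x + e * a, b)) a := by
  have hin : HasDerivAt (fun s : ℝ => (x + e * s, b)) ((e : ℝ), (0 : ℝ)) a := by
    simpa using (((hasDerivAt_id a).const_mul e).const_add x).prodMk (hasDerivAt_const a b)
  have := (hF.differentiable (by simp) (x + e * a, b)).hasFDerivAt.comp_hasDerivAt a hin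
  have he : ((e : ℝ), (0 : ℝ)) = e • ((1 : ℝ), (0 : ℝ)) := by simp
  rw [he, map_smul] at this
  simpa [pdx_eq_fderiv hF, smul_eq_mul, Function.comp_def] using this

lemma hasDerivAt_lineT {F : ℝ × ℝ → ℝ} (hF : ContDiff ℝ (⊤ : ℕ∞) F) (y c e b : ℝ) :
    HasDerivAt (fun s : ℝ => F (y, c + e * s)) (e * pdt F (y, c + e * b)) b := by
  have hin : HasDerivAt (fun s : ℝ => (y, c + e * s)) ((0 : ℝ), (e : ℝ)) b := by
    simpa using (hasDerivAt_const b y).prodMk (((hasDerivAt_id b).const_mul e).const_add c)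
  have := (hF.differentiable (by simp) (y, c + e * b)).hasFDerivAt.comp_hasDerivAt b hin
  have he : ((0 : ℝ), (e : ℝ)) = e • ((0 : ℝ), (1 : ℝ)) := by simp
  rw [he, map_smul] at this
  simpa [pdt_eq_fderiv hF, smul_eq_mul, Function.comp_def] using this

lemma hasDerivAt_lineP {F : ℝ × ℝ → ℝ} (hF : ContDiff ℝ (⊤ : ℕ∞) F) (x b a : ℝ) :
    HasDerivAt (fun s : ℝ => F (x + s, b)) (pdx F (x + a, b)) a := by
  simpa using hasDerivAt_line hF x b 1 a

lemma hasDerivAt_lineM {F : ℝ × ℝ → ℝ} (hF : ContDiff ℝ (⊤ : ℕ∞) F) (x b a : ℝ) :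
    HasDerivAt (fun s : ℝ => F (x - s, b)) (-pdx F (x - a, b)) a := by
  have := hasDerivAt_line hF x b (-1) a
  simpa [neg_one_mul, ← sub_eq_add_neg] using this

lemma hasDerivAt_lineP2 {F : ℝ × ℝ → ℝ} (hF : ContDiff ℝ (⊤ : ℕ∞) F) (x b a : ℝ) :
    HasDerivAt (fun s : ℝ => F (x + 2 * s, b)) (2 * pdx F (x + 2 * a, b)) a :=
  hasDerivAt_line hF x b 2 a

lemma hasDerivAt_lineM2 {F : ℝ × ℝ → ℝ} (hF : ContDiff ℝ (⊤ : ℕ∞) F) (x b a : ℝ) :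
    HasDerivAt (fun s : ℝ => F (x - 2 * s, b)) (-(2 * pdx F (x - 2 * a, b))) a := by
  have := hasDerivAt_line hF x b (-2) a
  simpa [neg_mul, ← sub_eq_add_neg] using this

lemma HasDerivAt.congr_d {f : ℝ → ℝ} {d d' x : ℝ} (h : HasDerivAt f d x) (hd : d' = d) :
    HasDerivAt f d' x := hd ▸ h

lemma pdx_slice_congr {f g : ℝ × ℝ → ℝ} {b c : ℝ} (h : ∀ y, f (y, b) = g (y, c)) :
    ∀ y, pdx f (y, b) = pdx g (y, c) := fun y => by
  show deriv (fun z => f (z, b)) y = deriv (fun z => g (z, c)) y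
  exact congrArg (fun F => deriv F y) (funext h)

lemma descent {ψ ψ' : ℝ → ℝ} {K : ℝ} {k : ℕ} {a : ℝ} (ha : 0 ≤ a)
    (h0 : ψ 0 = 0) (hd : ∀ s ∈ Icc (0:ℝ) a, HasDerivAt ψ (ψ' s) s)
    (hb : ∀ s ∈ Icc (0:ℝ) a, |ψ' s| ≤ K * s ^ k) (hK : 0 ≤ K) :
    |ψ a| ≤ K * a ^ (k + 1) := by
  have := norm_image_sub_le_of_norm_deriv_le_segment' (f := ψ) (f' := ψ') (C := K * a ^ k)
    (a := 0) (b := a) (fun s hs => (hd s hs).hasDerivWithinAt)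
    (fun s hs => by
      calc ‖ψ' s‖ ≤ K * s ^ k := hb s (Ico_subset_Icc_self hs)
        _ ≤ K * a ^ k := by
            have := pow_le_pow_left₀ hs.1 hs.2.le k
            exact mul_le_mul_of_nonneg_left this hK)
    a (right_mem_Icc.2 ha)
  rw [h0, sub_zero, sub_zero] at this
  calc |ψ a| ≤ K * a ^ k * a := this
    _ = K * a ^ (k+1) := by ring
lemma cd1 {F : ℝ × ℝ → ℝ} (hF : ContDiff ℝ (⊤ : ℕ∞) F) {x b a M : ℝ} (ha : 0 ≤ a)
    (hM : ∀ r ∈ Icc (-a) a, |pdx (pdx (pdx F)) (x + r, b)| ≤ M) :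
    |F (x + a, b) - F (x - a, b) - 2 * a * pdx F (x, b)| ≤ 2 * M * a ^ 3 := by
  set F1 := pdx F with hF1d
  set F2 := pdx F1 with hF2d
  set F3 := pdx F2 with hF3d
  have hF1 : ContDiff ℝ (⊤ : ℕ∞) F1 := contDiff_pdx hF
  have hF2 : ContDiff ℝ (⊤ : ℕ∞) F2 := contDiff_pdx hF1
  have hmem : ∀ s ∈ Icc (0:ℝ) a, ∀ e : ℝ, |e| ≤ 1 → |F3 (x + e * s, b)| ≤ M := by
    intro s hs e he
    refine hM (e * s) ⟨?_, ?_⟩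
    · nlinarith [abs_le.1 he, hs.1, hs.2, neg_abs_le e, le_abs_self e]
    · nlinarith [abs_le.1 he, hs.1, hs.2, neg_abs_le e, le_abs_self e]
  have hM0 : 0 ≤ M := le_trans (abs_nonneg _) (by simpa using hmem 0 ⟨le_refl _, ha⟩ 0 (by norm_num))
  -- level χ : F2 difference
  have hχ : ∀ s ∈ Icc (0:ℝ) a, |F2 (x + s, b) - F2 (x - s, b)| ≤ 2 * M * s ^ 1 := by
    intro s hs
    refine descent (ψ := fun s => F2 (x + s, b) - F2 (x - s, b))
      (ψ' := fun r => F3 (x + r, b) + F3 (x - r, b)) hs.1 (by simp)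
      (fun r hr => ((hasDerivAt_lineP hF2 x b r).sub
        (hasDerivAt_lineM hF2 x b r)).congr_d (by simp only [hF3d]; ring)) (fun r hr => ?_)
      (by positivity)
    have h1 : |F3 (x + r, b)| ≤ M := by
      have := hmem r ⟨hr.1, hr.2.trans hs.2⟩ 1 (by norm_num); simpa using this
    have h2 : |F3 (x - r, b)| ≤ M := by
      have := hmem r ⟨hr.1, hr.2.trans hs.2⟩ (-1) (by norm_num)
      simpa [← sub_eq_add_neg, neg_one_mul] using this
    calc |F3 (x + r, b) + F3 (x - r, b)| ≤ |F3 (x + r, b)| + |F3 (x - r, b)| := abs_add_le _ _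
      _ ≤ 2 * M * r ^ 0 := by simp only [pow_zero, mul_one]; linarith
  -- level ψ : F1 sum
  have hψ : ∀ s ∈ Icc (0:ℝ) a, |F1 (x + s, b) + F1 (x - s, b) - 2 * F1 (x, b)| ≤ 2 * M * s ^ 2 := by
    intro s hs
    refine descent (ψ := fun s => F1 (x + s, b) + F1 (x - s, b) - 2 * F1 (x, b))
      (ψ' := fun r => F2 (x + r, b) - F2 (x - r, b)) hs.1 (by simp only [add_zero, sub_zero]; ring)
      (fun r hr => (((hasDerivAt_lineP hF1 x b r).add
        (hasDerivAt_lineM hF1 x b r)).sub_const (2 * F1 (x, b))).congr_d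
        (by simp only [hF2d]; ring)) (fun r hr => hχ r ⟨hr.1, hr.2.trans hs.2⟩) (by positivity)
  -- level φ
  have hφ := descent (ψ := fun s => F (x + s, b) - F (x - s, b) - 2 * s * F1 (x, b))
    (ψ' := fun s => F1 (x + s, b) + F1 (x - s, b) - 2 * F1 (x, b)) ha (by ring_nf)
    (fun r hr => (((hasDerivAt_lineP hF x b r).sub (hasDerivAt_lineM hF x b r)).sub
      (((hasDerivAt_id r).const_mul 2).mul_const (F1 (x, b)))).congr_d (by simp only [hF1d]; ring))
    hψ (by positivity)
  simpa using hφ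

/-- Third-order centered difference estimate, uniform in the parameter `b`. -/
lemma cd3 {F : ℝ × ℝ → ℝ} (hF : ContDiff ℝ (⊤ : ℕ∞) F) {x b a M : ℝ} (ha : 0 ≤ a)
    (hM : ∀ r ∈ Icc (-(2*a)) (2*a), |pdx (pdx (pdx (pdx (pdx F)))) (x + r, b)| ≤ M) :
    |F (x + 2*a, b) - 2 * F (x + a, b) + 2 * F (x - a, b) - F (x - 2*a, b)
      - 2 * a ^ 3 * pdx (pdx (pdx F)) (x, b)| ≤ 68 * M * a ^ 5 := by
  set F1 := pdx F with hF1d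
  set F2 := pdx F1 with hF2d
  set F3 := pdx F2 with hF3d
  set F4 := pdx F3 with hF4d
  set F5 := pdx F4 with hF5d
  have hF1 : ContDiff ℝ (⊤ : ℕ∞) F1 := contDiff_pdx hF
  have hF2 : ContDiff ℝ (⊤ : ℕ∞) F2 := contDiff_pdx hF1
  have hF3 : ContDiff ℝ (⊤ : ℕ∞) F3 := contDiff_pdx hF2
  have hF4 : ContDiff ℝ (⊤ : ℕ∞) F4 := contDiff_pdx hF3
  have hmem : ∀ s ∈ Icc (0:ℝ) a, ∀ e : ℝ, |e| ≤ 2 → |F5 (x + e * s, b)| ≤ M := by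
    intro s hs e he
    refine hM (e * s) ⟨?_, ?_⟩
    · nlinarith [abs_le.1 he, hs.1, hs.2, neg_abs_le e, le_abs_self e]
    · nlinarith [abs_le.1 he, hs.1, hs.2, neg_abs_le e, le_abs_self e]
  have hM0 : 0 ≤ M := le_trans (abs_nonneg _)
    (by simpa using hmem 0 ⟨le_refl _, ha⟩ 0 (by norm_num))
  have key : ∀ s ∈ Icc (0:ℝ) a, ∀ e : ℝ, |e| ≤ 2 → |F5 (x + e * s, b)| ≤ M := hmem
  -- δ2
  have hδ2 : ∀ s ∈ Icc (0:ℝ) a, |F4 (x + 2*s, b) - F4 (x - 2*s, b)| ≤ 4 * M * s ^ 1 := by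
    intro s hs
    refine descent (ψ := fun s => F4 (x + 2*s, b) - F4 (x - 2*s, b))
      (ψ' := fun r => 2 * F5 (x + 2*r, b) + 2 * F5 (x - 2*r, b)) hs.1 (by norm_num)
      (fun r hr => ((hasDerivAt_lineP2 hF4 x b r).sub
        (hasDerivAt_lineM2 hF4 x b r)).congr_d (by simp only [hF5d]; ring)) (fun r hr => ?_)
      (by positivity)
    have h1 : |F5 (x + 2*r, b)| ≤ M := by
      simpa using key r ⟨hr.1, hr.2.trans hs.2⟩ 2 (by norm_num)
    have h2 : |F5 (x - 2*r, b)| ≤ M := by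
      have := key r ⟨hr.1, hr.2.trans hs.2⟩ (-2) (by norm_num)
      simpa [← sub_eq_add_neg, neg_mul] using this
    calc |2 * F5 (x + 2*r, b) + 2 * F5 (x - 2*r, b)|
        ≤ |2 * F5 (x + 2*r, b)| + |2 * F5 (x - 2*r, b)| := abs_add_le _ _
      _ ≤ 4 * M * r ^ 0 := by rw [abs_mul, abs_mul]; norm_num; linarith
  have hδ1 : ∀ s ∈ Icc (0:ℝ) a, |F4 (x + s, b) - F4 (x - s, b)| ≤ 2 * M * s ^ 1 := by
    intro s hs
    refine descent (ψ := fun s => F4 (x + s, b) - F4 (x - s, b))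
      (ψ' := fun r => F5 (x + r, b) + F5 (x - r, b)) hs.1 (by norm_num)
      (fun r hr => ((hasDerivAt_lineP hF4 x b r).sub
        (hasDerivAt_lineM hF4 x b r)).congr_d (by simp only [hF5d]; ring)) (fun r hr => ?_)
      (by positivity)
    have h1 : |F5 (x + r, b)| ≤ M := by
      simpa using key r ⟨hr.1, hr.2.trans hs.2⟩ 1 (by norm_num)
    have h2 : |F5 (x - r, b)| ≤ M := by
      have := key r ⟨hr.1, hr.2.trans hs.2⟩ (-1) (by norm_num)
      simpa [← sub_eq_add_neg, neg_one_mul] using this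
    calc |F5 (x + r, b) + F5 (x - r, b)| ≤ |F5 (x + r, b)| + |F5 (x - r, b)| := abs_add_le _ _
      _ ≤ 2 * M * r ^ 0 := by norm_num; linarith
  -- φ3
  have hφ3 : ∀ s ∈ Icc (0:ℝ) a,
      |8 * F3 (x + 2*s, b) - 2 * F3 (x + s, b) - 2 * F3 (x - s, b) + 8 * F3 (x - 2*s, b)
        - 12 * F3 (x, b)| ≤ 68 * M * s ^ 2 := by
    intro s hs
    refine descent (ψ := fun s => 8 * F3 (x + 2*s, b) - 2 * F3 (x + s, b) - 2 * F3 (x - s, b)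
        + 8 * F3 (x - 2*s, b) - 12 * F3 (x, b))
      (ψ' := fun r => 16 * F4 (x + 2*r, b) - 2 * F4 (x + r, b) + 2 * F4 (x - r, b)
        - 16 * F4 (x - 2*r, b)) hs.1 (by norm_num; try ring)
      (fun r hr => ((((((hasDerivAt_lineP2 hF3 x b r).const_mul 8).sub
        ((hasDerivAt_lineP hF3 x b r).const_mul 2)).sub
        ((hasDerivAt_lineM hF3 x b r).const_mul 2)).add
        ((hasDerivAt_lineM2 hF3 x b r).const_mul 8)).sub_const (12 * F3 (x, b))).congr_d
        (by simp only [hF4d]; ring)) (fun r hr => ?_) (by positivity)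
    have e2 := hδ2 r ⟨hr.1, hr.2.trans hs.2⟩
    have e1 := hδ1 r ⟨hr.1, hr.2.trans hs.2⟩
    have hrw : 16 * F4 (x + 2*r, b) - 2 * F4 (x + r, b) + 2 * F4 (x - r, b)
        - 16 * F4 (x - 2*r, b)
        = 16 * (F4 (x + 2*r, b) - F4 (x - 2*r, b)) - 2 * (F4 (x + r, b) - F4 (x - r, b)) := by
      ring
    show |16 * F4 (x + 2*r, b) - 2 * F4 (x + r, b) + 2 * F4 (x - r, b)
        - 16 * F4 (x - 2*r, b)| ≤ 68 * M * r ^ 1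
    rw [hrw]
    calc |16 * (F4 (x + 2*r, b) - F4 (x - 2*r, b)) - 2 * (F4 (x + r, b) - F4 (x - r, b))|
        ≤ |16 * (F4 (x + 2*r, b) - F4 (x - 2*r, b))| + |2 * (F4 (x + r, b) - F4 (x - r, b))| :=
          abs_sub _ _
      _ = 16 * |F4 (x + 2*r, b) - F4 (x - 2*r, b)| + 2 * |F4 (x + r, b) - F4 (x - r, b)| := by
          rw [abs_mul, abs_mul]; norm_num
      _ ≤ 68 * M * r ^ 1 := by
          rw [pow_one] at e1 e2 ⊢; nlinarith
  -- φ2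
  have hφ2 : ∀ s ∈ Icc (0:ℝ) a,
      |4 * F2 (x + 2*s, b) - 2 * F2 (x + s, b) + 2 * F2 (x - s, b) - 4 * F2 (x - 2*s, b)
        - 12 * s * F3 (x, b)| ≤ 68 * M * s ^ 3 := by
    intro s hs
    refine descent (ψ := fun s => 4 * F2 (x + 2*s, b) - 2 * F2 (x + s, b) + 2 * F2 (x - s, b)
        - 4 * F2 (x - 2*s, b) - 12 * s * F3 (x, b))
      (ψ' := fun r => 8 * F3 (x + 2*r, b) - 2 * F3 (x + r, b) - 2 * F3 (x - r, b)
        + 8 * F3 (x - 2*r, b) - 12 * F3 (x, b)) hs.1 (by norm_num; try ring)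
      (fun r hr => ((((((hasDerivAt_lineP2 hF2 x b r).const_mul 4).sub
        ((hasDerivAt_lineP hF2 x b r).const_mul 2)).add
        ((hasDerivAt_lineM hF2 x b r).const_mul 2)).sub
        ((hasDerivAt_lineM2 hF2 x b r).const_mul 4)).sub
        (((hasDerivAt_id r).const_mul 12).mul_const (F3 (x, b)))).congr_d
        (by simp only [hF3d]; ring)) (fun r hr => hφ3 r ⟨hr.1, hr.2.trans hs.2⟩) (by positivity)
  -- φ1
  have hφ1 : ∀ s ∈ Icc (0:ℝ) a,
      |2 * F1 (x + 2*s, b) - 2 * F1 (x + s, b) - 2 * F1 (x - s, b) + 2 * F1 (x - 2*s, b)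
        - 6 * s ^ 2 * F3 (x, b)| ≤ 68 * M * s ^ 4 := by
    intro s hs
    refine descent (ψ := fun s => 2 * F1 (x + 2*s, b) - 2 * F1 (x + s, b) - 2 * F1 (x - s, b)
        + 2 * F1 (x - 2*s, b) - 6 * s ^ 2 * F3 (x, b))
      (ψ' := fun r => 4 * F2 (x + 2*r, b) - 2 * F2 (x + r, b) + 2 * F2 (x - r, b)
        - 4 * F2 (x - 2*r, b) - 12 * r * F3 (x, b)) hs.1 (by norm_num; try ring)
      (fun r hr => ((((((hasDerivAt_lineP2 hF1 x b r).const_mul 2).sub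
        ((hasDerivAt_lineP hF1 x b r).const_mul 2)).sub
        ((hasDerivAt_lineM hF1 x b r).const_mul 2)).add
        ((hasDerivAt_lineM2 hF1 x b r).const_mul 2)).sub
        (((hasDerivAt_pow 2 r).const_mul 6).mul_const (F3 (x, b)))).congr_d
        (by simp only [hF2d]; ring)) (fun r hr => hφ2 r ⟨hr.1, hr.2.trans hs.2⟩) (by positivity)
  -- φ0
  have hφ0 := descent (ψ := fun s => F (x + 2*s, b) - 2 * F (x + s, b) + 2 * F (x - s, b)
      - F (x - 2*s, b) - 2 * s ^ 3 * F3 (x, b))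
    (ψ' := fun r => 2 * F1 (x + 2*r, b) - 2 * F1 (x + r, b) - 2 * F1 (x - r, b)
      + 2 * F1 (x - 2*r, b) - 6 * r ^ 2 * F3 (x, b)) ha (by norm_num; try ring)
    (fun r hr => (((((hasDerivAt_lineP2 hF x b r).sub
      ((hasDerivAt_lineP hF x b r).const_mul 2)).add
      ((hasDerivAt_lineM hF x b r).const_mul 2)).sub
      (hasDerivAt_lineM2 hF x b r)).sub
      (((hasDerivAt_pow 3 r).const_mul 2).mul_const (F3 (x, b)))).congr_d
      (by simp only [hF1d]; ring)) hφ1 (by positivity)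
  simpa using hφ0

lemma odd_deriv2_zero {φ : ℝ → ℝ} (hodd : ∀ b, φ (-b) = -φ b) :
    deriv (deriv φ) 0 = 0 := by
  have h1 : (fun x : ℝ => φ (-x)) = fun x => -φ x := funext fun x => hodd x
  have h2 : iteratedDeriv 2 (fun x : ℝ => φ (-x)) 0 = iteratedDeriv 2 φ 0 := by
    rw [iteratedDeriv_comp_neg]; norm_num
  rw [h1, iteratedDeriv_fun_neg] at h2
  have h3 : iteratedDeriv 2 φ 0 = 0 := by linarith [h2]
  rw [show (2:ℕ) = 0 + 1 + 1 from rfl, iteratedDeriv_succ, iteratedDeriv_succ,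
    iteratedDeriv_zero] at h3
  exact h3

lemma onevar_cubic {φ : ℝ → ℝ} (hφ : ContDiff ℝ (⊤ : ℕ∞) φ) (h0 : φ 0 = 0)
    (h1 : deriv φ 0 = 0) (h2 : deriv (deriv φ) 0 = 0) :
    ∃ δ > (0:ℝ), ∃ C : ℝ, ∀ b ∈ Icc (0:ℝ) δ, |φ b| ≤ C * b ^ 3 := by
  set φ1 := deriv φ with hφ1d
  set φ2 := deriv φ1 with hφ2d
  set φ3 := deriv φ2 with hφ3d
  have hφ' : ContDiff ℝ (↑(⊤:ℕ∞)) φ := hφ.of_le (by simp)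
  have hφ1 : ContDiff ℝ (↑(⊤:ℕ∞)) φ1 := (contDiff_infty_iff_deriv.1 hφ').2
  have hφ2 : ContDiff ℝ (↑(⊤:ℕ∞)) φ2 := (contDiff_infty_iff_deriv.1 hφ1).2
  have hφ3c : Continuous φ3 := (contDiff_infty_iff_deriv.1 hφ2).2.continuous
  obtain ⟨δ, hδ, hball⟩ := Metric.continuousAt_iff.1 hφ3c.continuousAt 1 one_pos
  set C := |φ3 0| + 1 with hC
  have hC0 : 0 ≤ C := by positivity
  refine ⟨δ/2, by positivity, C, fun b hb => ?_⟩
  have hb3 : ∀ s ∈ Icc (0:ℝ) b, |φ3 s| ≤ C * s ^ 0 := by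
    intro s hsi
    have : dist s 0 < δ := by
      rw [Real.dist_eq, sub_zero, abs_of_nonneg hsi.1]
      linarith [hsi.2, hb.2, hδ]
    have := hball this
    rw [Real.dist_eq] at this
    have := abs_sub_abs_le_abs_sub (φ3 s) (φ3 0)
    simp only [pow_zero, mul_one, hC]
    linarith
  have hd2 : ∀ s ∈ Icc (0:ℝ) b, |φ2 s| ≤ C * s ^ 1 := fun s hsi =>
    descent hsi.1 h2 (fun r _ => (hφ2.differentiable (by simp) r).hasDerivAt)
      (fun r hr => hb3 r ⟨hr.1, hr.2.trans hsi.2⟩) hC0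
  have hd1 : ∀ s ∈ Icc (0:ℝ) b, |φ1 s| ≤ C * s ^ 2 := fun s hsi =>
    descent hsi.1 h1 (fun r _ => (hφ1.differentiable (by simp) r).hasDerivAt)
      (fun r hr => hd2 r ⟨hr.1, hr.2.trans hsi.2⟩) hC0
  exact descent hb.1 h0 (fun r _ => (hφ.differentiable (by simp) r).hasDerivAt)
    (fun r hr => hd1 r ⟨hr.1, hr.2⟩) hC0
def Wf (u : ℝ×ℝ→ℝ) (t : ℝ) : ℝ×ℝ→ℝ := fun p => (u (p.1, t + p.2/2) + u (p.1, t - p.2/2))/2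
def Qf (u : ℝ×ℝ→ℝ) (t : ℝ) : ℝ×ℝ→ℝ :=
  fun p => (u (p.1, t + p.2/2)^2 + u (p.1, t - p.2/2)^2)/2
def Gf (u : ℝ×ℝ→ℝ) (t : ℝ) : ℝ×ℝ→ℝ := fun p => 1/3 * (Wf u t p * Qf u t p)

lemma res_split (u : ℝ×ℝ→ℝ) (x t a b : ℝ) (ha : a ≠ 0) (hb : b ≠ 0) :
    avfECres u x t a b =
      (Gf u t (x+a,b) - Gf u t (x-a,b) - 2*a*pdx (Gf u t) (x,b))/(2*a)
      + (Wf u t (x+2*a,b) - 2*Wf u t (x+a,b) + 2*Wf u t (x-a,b) - Wf u t (x-2*a,b)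
          - 2*a^3*pdx (pdx (pdx (Wf u t))) (x,b))/(2*a^3)
      + (b*pdx (Gf u t) (x,b) + b*pdx (pdx (pdx (Wf u t))) (x,b)
          + u (x,t+b/2) - u (x,t-b/2))/b := by
  simp only [avfECres, Dm, Dn, μm, μn, Sh, gridSample, Pi.add_apply, Pi.smul_apply,
    Pi.mul_apply, Pi.pow_apply, smul_eq_mul, Wf, Qf, Gf]
  norm_num
  field_simp
  ring_nf

/-- The AVF_EC scheme is second-order accurate at the centre of the stencil: for a smooth
solution of mKdV the residual is `O(Δx² + Δt²)` as `(Δx, Δt) → (0⁺, 0⁺)`. -/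
theorem avfEC_second_order (u : ℝ × ℝ → ℝ) (hu : ContDiff ℝ (⊤ : ℕ∞) u)
    (hsol : ∀ p : ℝ × ℝ, pdt u p + (u p) ^ 2 * pdx u p + pdx (pdx (pdx u)) p = 0)
    (x t : ℝ) :
    Asymptotics.IsBigO
      ((nhdsWithin (0 : ℝ) (Set.Ioi 0)) ×ˢ (nhdsWithin (0 : ℝ) (Set.Ioi 0)))
      (fun q : ℝ × ℝ => avfECres u x t q.1 q.2)
      (fun q : ℝ × ℝ => q.1 ^ 2 + q.2 ^ 2) := by
  -- smoothness of the building blocks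
  have hW : ContDiff ℝ (⊤ : ℕ∞) (Wf u t) := by
    apply ContDiff.div_const
    exact (hu.comp (contDiff_fst.prodMk (contDiff_const.add (contDiff_snd.div_const 2)))).add
      (hu.comp (contDiff_fst.prodMk (contDiff_const.sub (contDiff_snd.div_const 2))))
  have hQ : ContDiff ℝ (⊤ : ℕ∞) (Qf u t) := by
    apply ContDiff.div_const
    exact ((hu.comp (contDiff_fst.prodMk (contDiff_const.add
        (contDiff_snd.div_const 2)))).pow 2).add
      ((hu.comp (contDiff_fst.prodMk (contDiff_const.sub (contDiff_snd.div_const 2)))).pow 2)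
  have hG : ContDiff ℝ (⊤ : ℕ∞) (Gf u t) := contDiff_const.mul (hW.mul hQ)
  -- bounds for high derivatives on a compact neighbourhood
  have hcK : IsCompact ((Icc (x-2) (x+2)) ×ˢ (Icc (0:ℝ) 1)) := isCompact_Icc.prod isCompact_Icc
  obtain ⟨M3, hM3⟩ := hcK.exists_bound_of_continuousOn
    ((contDiff_pdx (contDiff_pdx (contDiff_pdx hG))).continuous.continuousOn)
  obtain ⟨M5, hM5⟩ := hcK.exists_bound_of_continuousOn
    ((contDiff_pdx (contDiff_pdx (contDiff_pdx (contDiff_pdx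
      (contDiff_pdx hW))))).continuous.continuousOn)
  have hxmem : ((x, 0) : ℝ × ℝ) ∈ (Icc (x-2) (x+2)) ×ˢ (Icc (0:ℝ) 1) :=
    Set.mem_prod.2 ⟨⟨by linarith, by linarith⟩, ⟨le_refl 0, zero_le_one⟩⟩
  have hM30 : 0 ≤ M3 := le_trans (norm_nonneg _) (hM3 _ hxmem)
  have hM50 : 0 ≤ M5 := le_trans (norm_nonneg _) (hM5 _ hxmem)
  -- the time-direction function φ
  set φ : ℝ → ℝ := fun s => s * pdx (Gf u t) (x, s) + s * pdx (pdx (pdx (Wf u t))) (x, s)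
      + u (x, t + s/2) - u (x, t - s/2) with hφdef
  have hg1c : ContDiff ℝ (⊤ : ℕ∞) (fun s : ℝ => pdx (Gf u t) (x, s)) :=
    (contDiff_pdx hG).comp (contDiff_const.prodMk contDiff_id)
  have hw3c : ContDiff ℝ (⊤ : ℕ∞) (fun s : ℝ => pdx (pdx (pdx (Wf u t))) (x, s)) :=
    (contDiff_pdx (contDiff_pdx (contDiff_pdx hW))).comp (contDiff_const.prodMk contDiff_id)
  have hupc : ContDiff ℝ (⊤ : ℕ∞) (fun s : ℝ => u (x, t + s/2)) :=
    hu.comp (contDiff_const.prodMk (contDiff_const.add (contDiff_id.div_const 2)))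
  have humc : ContDiff ℝ (⊤ : ℕ∞) (fun s : ℝ => u (x, t - s/2)) :=
    hu.comp (contDiff_const.prodMk (contDiff_const.sub (contDiff_id.div_const 2)))
  have hφc : ContDiff ℝ (⊤ : ℕ∞) φ :=
    (((contDiff_id.mul hg1c).add (contDiff_id.mul hw3c)).add hupc).sub humc
  have hφ0 : φ 0 = 0 := by norm_num [hφdef]
  -- φ is odd
  have hWe : ∀ s y, Wf u t (y, -s) = Wf u t (y, s) := by
    intro s y
    show (u (y, t + -s/2) + u (y, t - -s/2))/2 = (u (y, t + s/2) + u (y, t - s/2))/2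
    rw [show t + -s/2 = t - s/2 by ring, show t - -s/2 = t + s/2 by ring]
    ring
  have hQe : ∀ s y, Qf u t (y, -s) = Qf u t (y, s) := by
    intro s y
    show (u (y, t + -s/2)^2 + u (y, t - -s/2)^2)/2 = (u (y, t + s/2)^2 + u (y, t - s/2)^2)/2
    rw [show t + -s/2 = t - s/2 by ring, show t - -s/2 = t + s/2 by ring]
    ring
  have hGe : ∀ s y, Gf u t (y, -s) = Gf u t (y, s) := by
    intro s y
    show 1/3 * (Wf u t (y, -s) * Qf u t (y, -s)) = 1/3 * (Wf u t (y, s) * Qf u t (y, s))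
    rw [hWe, hQe]
  have hG1e : ∀ s, pdx (Gf u t) (x, -s) = pdx (Gf u t) (x, s) :=
    fun s => pdx_slice_congr (hGe s) x
  have hW1e : ∀ s y, pdx (Wf u t) (y, -s) = pdx (Wf u t) (y, s) :=
    fun s => pdx_slice_congr (hWe s)
  have hW2e : ∀ s y, pdx (pdx (Wf u t)) (y, -s) = pdx (pdx (Wf u t)) (y, s) :=
    fun s => pdx_slice_congr (hW1e s)
  have hW3e : ∀ s, pdx (pdx (pdx (Wf u t))) (x, -s) = pdx (pdx (pdx (Wf u t))) (x, s) :=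
    fun s => pdx_slice_congr (hW2e s) x
  have hφodd : ∀ s, φ (-s) = -φ s := by
    intro s
    show (-s) * pdx (Gf u t) (x, -s) + (-s) * pdx (pdx (pdx (Wf u t))) (x, -s)
        + u (x, t + -s/2) - u (x, t - -s/2) = -φ s
    rw [hG1e, hW3e, show t + -s/2 = t - s/2 by ring, show t - -s/2 = t + s/2 by ring]
    simp only [hφdef]
    ring
  have h2 : deriv (deriv φ) 0 = 0 := odd_deriv2_zero hφodd
  -- first derivative of φ at 0 vanishes, using the mKdV equation
  have hgd : HasDerivAt (fun s : ℝ => s * pdx (Gf u t) (x, s)) (pdx (Gf u t) (x, 0)) 0 := by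
    have h := (hasDerivAt_id (0:ℝ)).mul ((hg1c.differentiable (by simp) 0).hasDerivAt)
    simpa [Pi.mul_def] using h
  have hwd : HasDerivAt (fun s : ℝ => s * pdx (pdx (pdx (Wf u t))) (x, s))
      (pdx (pdx (pdx (Wf u t))) (x, 0)) 0 := by
    have h := (hasDerivAt_id (0:ℝ)).mul ((hw3c.differentiable (by simp) 0).hasDerivAt)
    simpa [Pi.mul_def] using h
  have hupd : HasDerivAt (fun s : ℝ => u (x, t + s/2)) (1/2 * pdt u (x, t + 1/2 * 0)) 0 := by
    have e : (fun s : ℝ => u (x, t + 1/2 * s)) = fun s : ℝ => u (x, t + s/2) := by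
      funext s; ring_nf
    exact e ▸ hasDerivAt_lineT hu x t (1/2) 0
  have humd : HasDerivAt (fun s : ℝ => u (x, t - s/2)) (-(1/2) * pdt u (x, t + -(1/2) * 0)) 0 := by
    have e : (fun s : ℝ => u (x, t + -(1/2) * s)) = fun s : ℝ => u (x, t - s/2) := by
      funext s; ring_nf
    exact e ▸ hasDerivAt_lineT hu x t (-(1/2)) 0
  have hφd : HasDerivAt φ (pdx (Gf u t) (x, 0) + pdx (pdx (pdx (Wf u t))) (x, 0)
      + pdt u (x, t)) 0 := by
    have h := ((hgd.add hwd).add hupd).sub humd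
    rw [hφdef]
    refine h.congr_d ?_
    norm_num
    ring
  have hG10 : pdx (Gf u t) (x, 0) = u (x, t)^2 * pdx u (x, t) := by
    have hGsl : ∀ y, Gf u t (y, 0) = (fun p : ℝ × ℝ => 1/3 * (u p * u p ^ 2)) (y, t) := by
      intro y
      show 1/3 * ((u (y, t + 0/2) + u (y, t - 0/2))/2 *
        ((u (y, t + 0/2)^2 + u (y, t - 0/2)^2)/2)) = 1/3 * (u (y, t) * u (y, t) ^ 2)
      norm_num
      try ring
    rw [pdx_slice_congr (f := Gf u t) (g := fun p : ℝ × ℝ => 1/3 * (u p * u p ^ 2))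
      (b := 0) (c := t) hGsl x]
    have hs : HasDerivAt (fun y => u (y, t)) (pdx u (x, t)) x := by
      have h := hasDerivAt_slice1 hu x t
      rwa [← pdx_eq_fderiv hu (x, t)] at h
    have hprod : HasDerivAt (fun y => 1/3 * (u (y, t) * u (y, t) ^ 2))
        (u (x, t)^2 * pdx u (x, t)) x :=
      ((hs.mul (hs.pow 2)).const_mul (1/3)).congr_d (by simp only [Pi.pow_apply]; ring)
    show deriv (fun y => 1/3 * (u (y, t) * u (y, t) ^ 2)) x = u (x, t)^2 * pdx u (x, t)
    exact hprod.deriv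
  have hW30 : pdx (pdx (pdx (Wf u t))) (x, 0) = pdx (pdx (pdx u)) (x, t) := by
    have hWsl : ∀ y, Wf u t (y, 0) = u (y, t) := by
      intro y
      show (u (y, t + 0/2) + u (y, t - 0/2))/2 = u (y, t)
      norm_num
    have h1' := pdx_slice_congr (g := u) (c := t) hWsl
    have h2' := pdx_slice_congr h1'
    exact pdx_slice_congr h2' x
  have h1 : deriv φ 0 = 0 := by
    rw [hφd.deriv, hG10, hW30]
    have := hsol (x, t)
    linarith
  -- cubic bound for φ near 0
  obtain ⟨δ, hδ0, C, hC⟩ := onevar_cubic hφc hφ0 h1 h2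
  have hC0 : 0 ≤ C := by
    have h := le_trans (abs_nonneg (φ δ)) (hC δ ⟨hδ0.le, le_refl δ⟩)
    nlinarith [pow_pos hδ0 3]
  -- final assembly
  rw [Asymptotics.isBigO_iff]
  refine ⟨M3 + 34 * M5 + C, ?_⟩
  have hmem : Ioo (0:ℝ) (min 1 δ) ×ˢ Ioo (0:ℝ) (min 1 δ) ∈
      (nhdsWithin (0:ℝ) (Set.Ioi 0)) ×ˢ (nhdsWithin (0:ℝ) (Set.Ioi 0)) :=
    Filter.prod_mem_prod (Ioo_mem_nhdsGT_of_mem ⟨le_refl 0, lt_min one_pos hδ0⟩)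
      (Ioo_mem_nhdsGT_of_mem ⟨le_refl 0, lt_min one_pos hδ0⟩)
  filter_upwards [Filter.eventually_mem_set.2 hmem] with q hq
  obtain ⟨hqa, hqb⟩ := hq
  obtain ⟨a, b⟩ := q
  simp only [Prod.fst, Prod.snd] at hqa hqb ⊢
  have ha1 : 0 < a := hqa.1
  have ha2 : a ≤ 1 := (hqa.2.trans_le (min_le_left _ _)).le
  have hb1 : 0 < b := hqb.1
  have hb2 : b ≤ 1 := (hqb.2.trans_le (min_le_left _ _)).le
  have hbδ : b ≤ δ := (hqb.2.trans_le (min_le_right _ _)).le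
  rw [res_split u x t a b ha1.ne' hb1.ne']
  -- bound the three pieces
  have e1 : |(Gf u t (x+a,b) - Gf u t (x-a,b) - 2*a*pdx (Gf u t) (x,b))/(2*a)| ≤ M3 * a^2 := by
    have hcd := cd1 hG (x := x) (b := b) (a := a) ha1.le (fun r hr => by
      obtain ⟨hrl, hrr⟩ := hr
      have hm : ((x + r, b) : ℝ × ℝ) ∈ (Icc (x-2) (x+2)) ×ˢ (Icc (0:ℝ) 1) :=
        Set.mem_prod.2 ⟨⟨show x - 2 ≤ x + r by linarith, show x + r ≤ x + 2 by linarith⟩,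
          ⟨hb1.le, hb2⟩⟩
      simpa [Real.norm_eq_abs] using hM3 _ hm)
    rw [abs_div, abs_of_pos (by linarith : (0:ℝ) < 2*a), div_le_iff₀ (by linarith)]
    have hr : M3 * a^2 * (2*a) = 2 * M3 * a^3 := by ring
    linarith
  have e2 : |(Wf u t (x+2*a,b) - 2*Wf u t (x+a,b) + 2*Wf u t (x-a,b) - Wf u t (x-2*a,b)
      - 2*a^3*pdx (pdx (pdx (Wf u t))) (x,b))/(2*a^3)| ≤ 34 * M5 * a^2 := by
    have hcd := cd3 hW (x := x) (b := b) (a := a) ha1.le (fun r hr => by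
      obtain ⟨hrl, hrr⟩ := hr
      have hm : ((x + r, b) : ℝ × ℝ) ∈ (Icc (x-2) (x+2)) ×ˢ (Icc (0:ℝ) 1) :=
        Set.mem_prod.2 ⟨⟨show x - 2 ≤ x + r by linarith, show x + r ≤ x + 2 by linarith⟩,
          ⟨hb1.le, hb2⟩⟩
      simpa [Real.norm_eq_abs] using hM5 _ hm)
    rw [abs_div, abs_of_pos (by positivity : (0:ℝ) < 2*a^3), div_le_iff₀ (by positivity)]
    have hr : 34 * M5 * a^2 * (2*a^3) = 68 * M5 * a^5 := by ring
    linarith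
  have e3 : |(b*pdx (Gf u t) (x,b) + b*pdx (pdx (pdx (Wf u t))) (x,b)
      + u (x,t+b/2) - u (x,t-b/2))/b| ≤ C * b^2 := by
    have hφb := hC b ⟨hb1.le, hbδ⟩
    simp only [hφdef] at hφb
    rw [abs_div, abs_of_pos hb1, div_le_iff₀ hb1]
    have hr : C * b^2 * b = C * b^3 := by ring
    linarith
  rw [Real.norm_eq_abs, Real.norm_eq_abs, abs_of_nonneg (by positivity : (0:ℝ) ≤ a^2 + b^2)]
  set X := (Gf u t (x+a,b) - Gf u t (x-a,b) - 2*a*pdx (Gf u t) (x,b))/(2*a)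
  set Y := (Wf u t (x+2*a,b) - 2*Wf u t (x+a,b) + 2*Wf u t (x-a,b) - Wf u t (x-2*a,b)
      - 2*a^3*pdx (pdx (pdx (Wf u t))) (x,b))/(2*a^3)
  set Z := (b*pdx (Gf u t) (x,b) + b*pdx (pdx (pdx (Wf u t))) (x,b)
      + u (x,t+b/2) - u (x,t-b/2))/b
  have habs : |X + Y + Z| ≤ |X| + |Y| + |Z| :=
    (abs_add_le _ _).trans (by linarith [abs_add_le X Y])
  nlinarith [mul_nonneg hM30 (sq_nonneg b), mul_nonneg hM50 (sq_nonneg b),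
    mul_nonneg hC0 (sq_nonneg a), sq_nonneg a, sq_nonneg b]
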